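/- (Cigler) Let q ∈ ℝ with q > 0, q ≠ 1, and assume q^j ≠ 1 for 1 ≤ j ≤ n. For every function f : ℝ → ℝ and every real x ≠ 0, the scaling operator (Df)(x) = f(qx) satisfies (D^n f)(x) = f(q^n x) = Σ_{m=0}^n [n choose m]_q (q−1)^m x^m q^{m(m−1)/2} (D_q^m f)(x). -/

import Mathlib

/-!
Induction on `n`, keeping `x` fixed and varying `f`: `f (q ^ (n + 1) * x)` is the case `n` applied
to `D f`. The commutation `D_q D = q D D_q` and `f (q x) = f x + (q - 1) x (D_q f)(x)` split each
term `(q-1)^m x^m q^(m(m-1)/2) (D_q^m D f)(x)` into `q^m` times the `m`-th term of `f` plus its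
`(m+1)`-th term, and the q-Pascal rule `[n+1, k+1]_q = q^(k+1) [n, k+1]_q + [n, k]_q` recombines
the two sums.
-/

noncomputable def jackson (q : ℝ) (f : ℝ → ℝ) : ℝ → ℝ :=
  fun x => (f (q * x) - f x) / ((q - 1) * x)

def scaleOp (q : ℝ) (f : ℝ → ℝ) : ℝ → ℝ := fun x => f (q * x)

noncomputable def qBinom (q : ℝ) (n m : ℕ) : ℝ :=
  ∏ i ∈ Finset.range m, (q ^ (n - i) - 1) / (q ^ (i + 1) - 1)

open Finset

section QBinom

variable (q : ℝ)

@[simp]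
lemma qBinom_zero_right (n : ℕ) : qBinom q n 0 = 1 := by
  simp [qBinom]

lemma qBinom_succ_self (n : ℕ) : qBinom q n (n + 1) = 0 :=
  prod_eq_zero (self_mem_range_succ n) (by simp)

variable {q}

lemma qBinom_succ_succ {n k : ℕ} (hk : k ≤ n) (hq : ∀ j, 1 ≤ j → j ≤ k + 1 → q ^ j ≠ 1) :
    qBinom q (n + 1) (k + 1) = q ^ (k + 1) * qBinom q n (k + 1) + qBinom q n k := by
  have hden : ∏ i ∈ range k, (q ^ (i + 1) - 1) ≠ 0 :=
    prod_ne_zero_iff.mpr fun i hi => sub_ne_zero.mpr (hq _ le_add_self (by simp at hi; omega))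
  have hlast : q ^ (k + 1) - 1 ≠ 0 := sub_ne_zero.mpr (hq _ le_add_self le_rfl)
  have hnum : ∏ i ∈ range (k + 1), (q ^ (n + 1 - i) - 1)
      = (q ^ (n + 1) - 1) * ∏ i ∈ range k, (q ^ (n - i) - 1) := by
    rw [prod_range_succ']
    simp only [Nat.succ_sub_succ, Nat.sub_zero]
    ring
  have hpow : q ^ (n + 1) = q ^ (n - k) * q ^ (k + 1) := by
    rw [← pow_add]
    congr 1
    omega
  simp only [qBinom, prod_div_distrib]
  rw [hnum]
  simp only [prod_range_succ]
  rw [hpow]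
  field_simp
  ring

lemma sum_qBinom_succ_mul {n : ℕ} (hq : ∀ j, 1 ≤ j → j ≤ n + 1 → q ^ j ≠ 1) (T : ℕ → ℝ) :
    ∑ m ∈ range (n + 2), qBinom q (n + 1) m * T m
      = ∑ m ∈ range (n + 1), qBinom q n m * (q ^ m * T m + T (m + 1)) := by
  have hpascal : ∀ k ∈ range (n + 1), qBinom q (n + 1) (k + 1) * T (k + 1)
      = q ^ (k + 1) * qBinom q n (k + 1) * T (k + 1) + qBinom q n k * T (k + 1) := by
    intro k hk
    rw [mem_range] at hk
    rw [qBinom_succ_succ (by omega) fun j hj1 hj2 => hq j hj1 (by omega)]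
    ring
  rw [sum_range_succ', sum_congr rfl hpascal, sum_add_distrib,
    sum_range_succ (fun k => q ^ (k + 1) * qBinom q n (k + 1) * T (k + 1)), qBinom_succ_self]
  simp only [mul_add, sum_add_distrib]
  rw [sum_range_succ' (fun m => qBinom q n m * (q ^ m * T m))]
  simp only [qBinom_zero_right]
  ring_nf

end QBinom

section Operators

variable (q : ℝ)

lemma scaleOp_iterate_apply (f : ℝ → ℝ) (n : ℕ) (x : ℝ) :
    (scaleOp q)^[n] f x = f (q ^ n * x) := by
  induction n generalizing x with
  | zero => simp
  | succ n ih =>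
    rw [Function.iterate_succ_apply']
    change (scaleOp q)^[n] f (q * x) = _
    rw [ih, pow_succ, mul_assoc]

lemma jackson_smul (c : ℝ) (f : ℝ → ℝ) : jackson q (c • f) = c • jackson q f := by
  ext x
  simp only [jackson, Pi.smul_apply, smul_eq_mul]
  ring

lemma jackson_scaleOp (f : ℝ → ℝ) : jackson q (scaleOp q f) = q • scaleOp q (jackson q f) := by
  ext x
  simp only [jackson, scaleOp, Pi.smul_apply, smul_eq_mul]
  rcases eq_or_ne q 0 with rfl | hq
  · simp
  rw [mul_div_assoc', mul_left_comm (q - 1) q x, mul_div_mul_left _ _ hq]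

lemma jackson_iterate_scaleOp (f : ℝ → ℝ) (m : ℕ) :
    (jackson q)^[m] (scaleOp q f) = q ^ m • scaleOp q ((jackson q)^[m] f) := by
  induction m with
  | zero => simp
  | succ m ih =>
    rw [Function.iterate_succ_apply', ih, jackson_smul, jackson_scaleOp, smul_smul, ← pow_succ,
      Function.iterate_succ_apply']

variable {q}

lemma scaleOp_apply_eq_add_jackson (hq : q ≠ 1) (f : ℝ → ℝ) {x : ℝ} (hx : x ≠ 0) :
    scaleOp q f x = f x + (q - 1) * x * jackson q f x := by
  rw [jackson, mul_div_cancel₀ _ (mul_ne_zero (sub_ne_zero.mpr hq) hx)]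
  simp [scaleOp]

end Operators

noncomputable def ciglerTerm (q : ℝ) (f : ℝ → ℝ) (x : ℝ) (m : ℕ) : ℝ :=
  (q - 1) ^ m * x ^ m * q ^ (m * (m - 1) / 2) * (jackson q)^[m] f x

lemma ciglerTerm_scaleOp {q : ℝ} (hq : q ≠ 1) (f : ℝ → ℝ) {x : ℝ} (hx : x ≠ 0) (m : ℕ) :
    ciglerTerm q (scaleOp q f) x m = q ^ m * ciglerTerm q f x m + ciglerTerm q f x (m + 1) := by
  have hchoose : (m + 1) * (m + 1 - 1) / 2 = m * (m - 1) / 2 + m := by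
    simp only [← Nat.choose_two_right, Nat.choose_succ_succ', Nat.choose_one_right, add_comm]
  simp only [ciglerTerm, jackson_iterate_scaleOp, Pi.smul_apply, smul_eq_mul]
  rw [scaleOp_apply_eq_add_jackson hq _ hx, ← Function.iterate_succ_apply' (jackson q), hchoose]
  ring

lemma apply_pow_mul_eq_sum_qBinom_mul_ciglerTerm {q : ℝ} {x : ℝ} (hx : x ≠ 0) :
    ∀ {n : ℕ}, (∀ j, 1 ≤ j → j ≤ n → q ^ j ≠ 1) → ∀ f : ℝ → ℝ,
      f (q ^ n * x) = ∑ m ∈ range (n + 1), qBinom q n m * ciglerTerm q f x m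
  | 0, _, f => by simp [ciglerTerm]
  | n + 1, hq, f => by
    have hq1 : q ≠ 1 := by simpa using hq 1 le_rfl (by omega)
    calc f (q ^ (n + 1) * x) = scaleOp q f (q ^ n * x) := by rw [pow_succ', mul_assoc]; rfl
      _ = ∑ m ∈ range (n + 1), qBinom q n m * ciglerTerm q (scaleOp q f) x m :=
        apply_pow_mul_eq_sum_qBinom_mul_ciglerTerm hx (fun j hj1 hj2 => hq j hj1 (by omega)) _
      _ = ∑ m ∈ range (n + 2), qBinom q (n + 1) m * ciglerTerm q f x m := by
        simp only [ciglerTerm_scaleOp hq1 f hx, sum_qBinom_succ_mul hq]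

theorem cigler_scale_pow_general (q : ℝ) (n : ℕ)
    (hqn : ∀ j : ℕ, 1 ≤ j → j ≤ n → q ^ j ≠ 1) (f : ℝ → ℝ) (x : ℝ) (hx : x ≠ 0) :
    (scaleOp q)^[n] f x = f (q ^ n * x) ∧
    f (q ^ n * x) =
      ∑ m ∈ Finset.range (n + 1),
        qBinom q n m * (q - 1) ^ m * x ^ m * q ^ (m * (m - 1) / 2) *
          (jackson q)^[m] f x := by
  refine ⟨scaleOp_iterate_apply q f n x, ?_⟩
  simp only [apply_pow_mul_eq_sum_qBinom_mul_ciglerTerm hx hqn f, ciglerTerm, mul_assoc]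

/-- (Cigler) The expansion of the n-th power of the scaling operator in terms of
iterated Jackson q-derivatives:
`(D^n f)(x) = f(q^n x) = Σ_{m=0}^n [n choose m]_q (q−1)^m x^m q^{m(m−1)/2}(D_q^m f)(x)`. -/
theorem cigler_scale_pow (q : ℝ) (n : ℕ) (hq0 : 0 < q) (hq1 : q ≠ 1)
    (hqn : ∀ j : ℕ, 1 ≤ j → j ≤ n → q ^ j ≠ 1) (f : ℝ → ℝ) (x : ℝ) (hx : x ≠ 0) :
    (scaleOp q)^[n] f x = f (q ^ n * x) ∧
    f (q ^ n * x) =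
      ∑ m ∈ Finset.range (n + 1),
        qBinom q n m * (q - 1) ^ m * x ^ m * q ^ (m * (m - 1) / 2) *
          (jackson q)^[m] f x :=
  cigler_scale_pow_general q n hqn f x hx
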